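/- Let T be a closed brick in ℝⁿ and Σ the family of closed bricks contained in T. Suppose Φ : Σ → ℝ is finitely additive and Lipschitz (|Φ(S)| ≤ L·λ(S) for some L > 0 and all S ∈ Σ). If Φ is strongly differentiable with strong derivative Φ'(u) = 0 at Lebesgue almost every u ∈ int(T), then Φ(S) = 0 for every S ∈ Σ. -/

import Mathlib

open Set Filter MeasureTheory Topology

/-- A brick in ℝⁿ: a product of `n` bounded intervals. -/
def IsBrick {n : ℕ} (S : Set (Fin n → ℝ)) : Prop :=
  ∃ I : Fin n → Set ℝ,
    (∀ k, (I k).OrdConnected ∧ Bornology.IsBounded (I k)) ∧ S = Set.univ.pi I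

/-- The volume of a brick: the product of the lengths of its sides. -/
noncomputable def brickVol {n : ℕ} (S : Set (Fin n → ℝ)) : ℝ :=
  ∏ k : Fin n, (sSup ((fun x => x k) '' S) - sInf ((fun x => x k) '' S))

/-- A representation of a step function on `T`: a finite linear combination of
characteristic functions of bricks contained in `T`. -/
structure StepRepr {n : ℕ} (T : Set (Fin n → ℝ)) where
  M : ℕ
  c : Fin M → ℝ
  B : Fin M → Set (Fin n → ℝ)
  isBrick : ∀ j, IsBrick (B j)
  subset : ∀ j, B j ⊆ T

/-- The step function determined by a representation. -/
noncomputable def StepRepr.fn {n : ℕ} {T : Set (Fin n → ℝ)} (g : StepRepr T) :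
    (Fin n → ℝ) → ℝ :=
  fun x => ∑ j, g.c j * (g.B j).indicator (fun _ => (1 : ℝ)) x

/-- The integral of a step function. -/
noncomputable def StepRepr.integral {n : ℕ} {T : Set (Fin n → ℝ)} (g : StepRepr T) : ℝ :=
  ∑ j, g.c j * brickVol (g.B j)

/-- The sequence `F` converges nearly uniformly to `f` on `T`: it is uniformly bounded
on `T`, and for every `δ > 0` there are finitely many bricks (contained in `T`) of total
volume `< δ` such that `F` converges uniformly to `f` on the complement of their union. -/
def NearlyUniformlyTo {n : ℕ} (T : Set (Fin n → ℝ)) (F : ℕ → (Fin n → ℝ) → ℝ)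
    (f : (Fin n → ℝ) → ℝ) : Prop :=
  (∃ C : ℝ, ∀ m, ∀ x ∈ T, |F m x| ≤ C) ∧
  ∀ δ > (0 : ℝ), ∃ (M : ℕ) (B : Fin M → Set (Fin n → ℝ)),
    (∀ j, IsBrick (B j) ∧ B j ⊆ T) ∧ (∑ j, brickVol (B j)) < δ ∧
    TendstoUniformlyOn F f atTop (T \ ⋃ j, B j)

/-- `f` is K-integrable on `T`: some sequence of step functions converges nearly
uniformly to `f`. -/
def KIntegrable {n : ℕ} (T : Set (Fin n → ℝ)) (f : (Fin n → ℝ) → ℝ) : Prop :=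
  ∃ g : ℕ → StepRepr T, NearlyUniformlyTo T (fun m => (g m).fn) f

/-- `f` is K-integrable on `T` with K-integral `I`: some sequence of step functions
converges nearly uniformly to `f` and their integrals tend to `I`. -/
def HasKIntegral {n : ℕ} (T : Set (Fin n → ℝ)) (f : (Fin n → ℝ) → ℝ) (I : ℝ) : Prop :=
  ∃ g : ℕ → StepRepr T, NearlyUniformlyTo T (fun m => (g m).fn) f ∧
    Filter.Tendsto (fun m => (g m).integral) Filter.atTop (nhds I)

/-- The open Euclidean ball in `ℝⁿ` of center `u` and radius `r`. -/
def EBall {n : ℕ} (u : Fin n → ℝ) (r : ℝ) : Set (Fin n → ℝ) :=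
  {x | ∑ k, (x k - u k) ^ 2 < r ^ 2}

/-- The set `T_{x,α}` associated to a point `x` of the closed brick `[a, b]` and a
direction `α ∈ {-1,0,1}ⁿ`: the product of the intervals `[aₖ, xₖ)`, `{xₖ}`, `(xₖ, bₖ]`
according to the sign `αₖ`. -/
def dirSet {n : ℕ} (a b x : Fin n → ℝ) (α : Fin n → SignType) : Set (Fin n → ℝ) :=
  {y | ∀ k, y k ∈ (match α k with
    | SignType.neg => Set.Ico (a k) (x k)
    | SignType.zero => ({x k} : Set ℝ)
    | SignType.pos => Set.Ioc (x k) (b k))}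

/-- `f` has limit `L` at `x` in the direction `α`: the restriction of `f` to `T_{x,α}`
tends to `L` at `x`. -/
def HasDirLimit {n : ℕ} (a b : Fin n → ℝ) (f : (Fin n → ℝ) → ℝ) (x : Fin n → ℝ)
    (α : Fin n → SignType) (L : ℝ) : Prop :=
  Filter.Tendsto f (nhdsWithin x (dirSet a b x α)) (nhds L)

/-- The set of discontinuity points of the second kind of `f` on the closed brick
`[a, b]`: interior points where `f` is discontinuous and fails to have a finite limit in
some nonzero direction `α ∈ {-1,0,1}ⁿ`. -/
def dis2 {n : ℕ} (a b : Fin n → ℝ) (f : (Fin n → ℝ) → ℝ) : Set (Fin n → ℝ) :=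
  {x | x ∈ interior (Set.Icc a b) ∧ ¬ ContinuousWithinAt f (Set.Icc a b) x ∧
    ¬ ∀ α : Fin n → SignType, (∃ k, α k ≠ SignType.zero) →
        ∃ L : ℝ, HasDirLimit a b f x α L}

/-- `S` belongs to the family `Σ` of closed bricks contained in the closed brick
`[a, b]`. -/
def memSigma {n : ℕ} (a b : Fin n → ℝ) (S : Set (Fin n → ℝ)) : Prop :=
  ∃ c d : Fin n → ℝ, a ≤ c ∧ c ≤ d ∧ d ≤ b ∧ S = Set.Icc c d

/-- `Ψ : Σ → ℝ` is strongly differentiable at `u` with strong derivative `t`: for every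
`ε > 0` there is `δ > 0` such that `|Ψ(S)/λ(S) - t| < ε` for every `S ∈ Σ` with
`λ(S) > 0` and `S ⊆ B(u, δ)`. -/
def StronglyDiffAt {n : ℕ} (a b : Fin n → ℝ) (Ψ : Set (Fin n → ℝ) → ℝ)
    (u : Fin n → ℝ) (t : ℝ) : Prop :=
  ∀ ε > (0 : ℝ), ∃ δ > (0 : ℝ), ∀ S : Set (Fin n → ℝ), memSigma a b S →
    0 < brickVol S → S ⊆ EBall u δ → |Ψ S / brickVol S - t| < ε

/-- `Ψ : Σ → ℝ` is strongly differentiable at `u` in the direction `α ∈ {-1,1}ⁿ` with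
strong derivative `t`: for every `ε > 0` there is `δ > 0` such that
`|Ψ(S)/λ(S) - t| < ε` for every `S ∈ Σ` with `λ(S) > 0` and
`S ⊆ B(u, δ) ∩ closure T_{u,α}`. -/
def StronglyDiffDirAt {n : ℕ} (a b : Fin n → ℝ) (Ψ : Set (Fin n → ℝ) → ℝ)
    (u : Fin n → ℝ) (α : Fin n → SignType) (t : ℝ) : Prop :=
  ∀ ε > (0 : ℝ), ∃ δ > (0 : ℝ), ∀ S : Set (Fin n → ℝ), memSigma a b S →
    0 < brickVol S → S ⊆ EBall u δ ∩ closure (dirSet a b u α) →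
    |Ψ S / brickVol S - t| < ε

open Real

lemma image_eval_Icc {n : ℕ} {c d : Fin n → ℝ} (h : c ≤ d) (k : Fin n) :
    (fun x => x k) '' Icc c d = Icc (c k) (d k) := by
  ext t
  constructor
  · rintro ⟨x, hx, rfl⟩; exact ⟨hx.1 k, hx.2 k⟩
  · rintro ⟨h1, h2⟩
    refine ⟨Function.update c k t, ⟨?_, ?_⟩, by simp⟩
    · intro j; rcases eq_or_ne j k with rfl | hj
      · simpa using h1
      · simp [Function.update_of_ne hj]
    · intro j; rcases eq_or_ne j k with rfl | hj
      · simpa using h2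
      · simp [Function.update_of_ne hj]; exact h j

lemma brickVol_Icc {n : ℕ} {c d : Fin n → ℝ} (h : c ≤ d) :
    brickVol (Icc c d) = ∏ k, (d k - c k) := by
  unfold brickVol
  refine Finset.prod_congr rfl fun k _ => ?_
  rw [image_eval_Icc h, csSup_Icc (h k), csInf_Icc (h k)]

lemma sqrt_esq_triangle {n : ℕ} (u v x : Fin n → ℝ) :
    √(∑ k, (x k - u k)^2) ≤ √(∑ k, (x k - v k)^2) + √(∑ k, (v k - u k)^2) := by
  have key : ∀ p q : Fin n → ℝ,
      dist ((WithLp.equiv 2 (Fin n → ℝ)).symm p) ((WithLp.equiv 2 (Fin n → ℝ)).symm q)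
        = √(∑ k, (p k - q k)^2) := by
    intro p q
    rw [EuclideanSpace.dist_eq]
    congr 1
    refine Finset.sum_congr rfl fun k _ => ?_
    rw [Real.dist_eq, sq_abs]
    rfl
  have := dist_triangle ((WithLp.equiv 2 (Fin n → ℝ)).symm x)
    ((WithLp.equiv 2 (Fin n → ℝ)).symm v) ((WithLp.equiv 2 (Fin n → ℝ)).symm u)
  rwa [key, key, key] at this

lemma isClosed_goodSet {n : ℕ} (a b : Fin n → ℝ) (Φ : Set (Fin n → ℝ) → ℝ)
    (ε δ : ℝ) (hδ : 0 < δ) :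
    IsClosed {u : Fin n → ℝ | ∀ Q, memSigma a b Q → 0 < brickVol Q →
      Q ⊆ EBall u δ → |Φ Q| ≤ ε * brickVol Q} := by
  apply isClosed_of_closure_subset
  intro u hu Q hQ hvol hsub
  obtain ⟨c, d, hac, hcd, hdb, rfl⟩ := hQ
  have hne : (Icc c d).Nonempty := ⟨c, le_refl c, hcd⟩
  have hcomp : IsCompact (Icc c d) := isCompact_Icc
  set f : (Fin n → ℝ) → ℝ := fun x => √(∑ k, (x k - u k)^2) with hf
  have hfc : Continuous f := by
    apply Real.continuous_sqrt.comp
    exact continuous_finset_sum _ fun k _ => by fun_prop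
  obtain ⟨x₀, hx₀Q, hx₀max⟩ := hcomp.exists_isMaxOn hne hfc.continuousOn
  set s := f x₀ with hsdef
  have hs : s < δ := (Real.sqrt_lt' hδ).mpr (hsub hx₀Q)
  have hr : 0 < (δ - s)/(n+1) := by
    have h0 : (0:ℝ) < δ - s := by linarith
    positivity
  obtain ⟨u', hu'A, hdu⟩ := Metric.mem_closure_iff.mp hu _ hr
  refine hu'A (Icc c d) ⟨c, d, hac, hcd, hdb, rfl⟩ hvol ?_
  intro x hx
  have h1 : √(∑ k, (x k - u' k)^2) ≤ √(∑ k, (x k - u k)^2) + √(∑ k, (u k - u' k)^2) :=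
    sqrt_esq_triangle u' u x
  have h2 : √(∑ k, (u k - u' k)^2) < δ - s := by
    have hb : ∑ k, (u k - u' k)^2 ≤ n * ((δ - s)/(n+1))^2 := by
      calc ∑ k, (u k - u' k)^2 ≤ ∑ _k : Fin n, ((δ - s)/(n+1))^2 := by
            refine Finset.sum_le_sum fun k _ => ?_
            have : |u k - u' k| ≤ dist u u' := by
              rw [← Real.dist_eq]; exact dist_le_pi_dist u u' k
            have hle : |u k - u' k| ≤ (δ - s)/(n+1) := this.trans hdu.le
            obtain ⟨hl, hr2⟩ := abs_le.mp hle
            exact sq_le_sq' hl hr2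
        _ = n * ((δ - s)/(n+1))^2 := by simp [mul_comm]
    have hlt : (n : ℝ) * ((δ - s)/(n+1))^2 < (δ - s)^2 := by
      have h0 : (0:ℝ) < δ - s := by linarith
      rw [div_pow]
      have hnp : (0:ℝ) < ((n:ℝ)+1)^2 := by positivity
      have heq : (n:ℝ) * ((δ - s)^2/(((n:ℝ))+1)^2) = ((n:ℝ) * (δ - s)^2)/(((n:ℝ))+1)^2 := by ring
      rw [heq, div_lt_iff₀ hnp]
      have hp : (0:ℝ) < (δ - s)^2 := by positivity
      nlinarith [mul_nonneg (sq_nonneg ((n:ℝ))) hp.le, mul_nonneg (Nat.cast_nonneg (α := ℝ) n) hp.le]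
    exact (Real.sqrt_lt' (by linarith)).mpr (lt_of_le_of_lt hb hlt)
  have h3 : √(∑ k, (x k - u k)^2) ≤ s := hx₀max hx
  have : √(∑ k, (x k - u' k)^2) < δ := by linarith
  exact (Real.sqrt_lt' hδ).mp this

lemma interior_Icc_pi {n : ℕ} (p q : Fin n → ℝ) :
    interior (Icc p q) = Set.univ.pi (fun k => Ioo (p k) (q k)) := by
  rw [← pi_univ_Icc, interior_pi_set finite_univ]
  simp [interior_Icc]

lemma volume_interior_Icc {n : ℕ} {p q : Fin n → ℝ} (h : p ≤ q) :
    volume (interior (Icc p q)) = ENNReal.ofReal (brickVol (Icc p q)) := by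
  rw [interior_Icc_pi, volume_pi_pi, brickVol_Icc h,
    ENNReal.ofReal_prod_of_nonneg (fun k _ => sub_nonneg.2 (h k))]
  exact Finset.prod_congr rfl fun k _ => Real.volume_Ioo

lemma volume_Icc_toReal {n : ℕ} {p q : Fin n → ℝ} (h : p ≤ q) :
    (volume (Icc p q)).toReal = brickVol (Icc p q) := by
  rw [Real.volume_Icc_pi, brickVol_Icc h]
  rw [← ENNReal.ofReal_prod_of_nonneg (fun k _ => sub_nonneg.2 (h k))]
  exact ENNReal.toReal_ofReal (Finset.prod_nonneg fun k _ => sub_nonneg.2 (h k))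

lemma grid_cover_aux {N : ℕ} (hN : 0 < N) {a x b : ℝ} (h1 : a ≤ x) (h2 : x ≤ b) :
    ∃ j : ℕ, j < N ∧ a + (j:ℝ)/N * (b - a) ≤ x ∧ x ≤ a + ((j:ℝ)+1)/N * (b - a) := by
  have hNR : (0:ℝ) < N := Nat.cast_pos.2 hN
  rcases eq_or_lt_of_le (le_trans h1 h2 : a ≤ b) with heq | hlt
  · refine ⟨0, hN, ?_, ?_⟩
    · rw [← heq]; simpa using h1
    · rw [← heq]; simp only [sub_self, mul_zero, add_zero]; linarith
  · have he : (0:ℝ) < b - a := sub_pos.2 hlt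
    set t : ℝ := (x - a)/(b - a) with ht
    have ht0 : 0 ≤ t := div_nonneg (by linarith) he.le
    have ht1 : t ≤ 1 := (div_le_one he).2 (by linarith)
    have hte : t * (b - a) = x - a := div_mul_cancel₀ _ he.ne'
    refine ⟨min ⌊t * N⌋₊ (N-1), by omega, ?_, ?_⟩
    · have hj1 : ((min ⌊t * N⌋₊ (N-1) : ℕ):ℝ) ≤ t * N := by
        calc ((min ⌊t * N⌋₊ (N-1) : ℕ):ℝ) ≤ (⌊t * N⌋₊ : ℝ) := Nat.cast_le.2 (min_le_left _ _)
          _ ≤ t * N := Nat.floor_le (by positivity)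
      have : ((min ⌊t * N⌋₊ (N-1) : ℕ):ℝ)/N ≤ t := by rw [div_le_iff₀ hNR]; linarith
      nlinarith [mul_le_mul_of_nonneg_right this he.le]
    · have hj2 : t * N ≤ ((min ⌊t * N⌋₊ (N-1) : ℕ):ℝ) + 1 := by
        rcases le_or_gt ⌊t * N⌋₊ (N-1) with hc | hc
        · rw [min_eq_left hc]
          exact (Nat.lt_floor_add_one (t * N)).le
        · rw [min_eq_right hc.le, Nat.cast_sub hN]
          push_cast
          nlinarith
      have : t ≤ (((min ⌊t * N⌋₊ (N-1) : ℕ):ℝ) + 1)/N := by rw [le_div_iff₀ hNR]; linarith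
      nlinarith [mul_le_mul_of_nonneg_right this he.le]

lemma grid_cover {n N : ℕ} (hN : 0 < N) {c d x : Fin n → ℝ} (hx : x ∈ Icc c d) :
    ∃ i : Fin n → Fin N, ∀ k, c k + ((i k : ℕ) : ℝ)/N * (d k - c k) ≤ x k ∧
      x k ≤ c k + (((i k : ℕ) : ℝ)+1)/N * (d k - c k) := by
  have H : ∀ k, ∃ j : ℕ, j < N ∧ c k + (j:ℝ)/N * (d k - c k) ≤ x k ∧
      x k ≤ c k + ((j:ℝ)+1)/N * (d k - c k) := fun k => grid_cover_aux hN (hx.1 k) (hx.2 k)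
  choose j hjN hj1 hj2 using H
  exact ⟨fun k => ⟨j k, hjN k⟩, fun k => ⟨hj1 k, hj2 k⟩⟩


/-- If `Φ : Σ → ℝ` is finitely additive, Lipschitz (`|Φ(S)| ≤ L λ(S)`), and strongly
differentiable with strong derivative `0` at Lebesgue almost every interior point of the
closed brick `T = [a, b]`, then `Φ(S) = 0` for every `S ∈ Σ`. -/
theorem eq_zero_of_stronglyDiff_zero_ae {n : ℕ} (hn : 1 ≤ n) (a b : Fin n → ℝ)
    (Φ : Set (Fin n → ℝ) → ℝ) (L : ℝ) (hL : 0 < L)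
    (hLip : ∀ S : Set (Fin n → ℝ), memSigma a b S → |Φ S| ≤ L * brickVol S)
    (hadd : ∀ (m : ℕ) (S : Set (Fin n → ℝ)) (P : Fin m → Set (Fin n → ℝ)),
      memSigma a b S → (∀ i, memSigma a b (P i)) → S = ⋃ i, P i →
      (∀ i j, i ≠ j → interior (P i) ∩ interior (P j) = ∅) → Φ S = ∑ i, Φ (P i))
    (hdiff : ∀ᵐ u ∂(volume : Measure (Fin n → ℝ)), u ∈ interior (Set.Icc a b) →
      StronglyDiffAt a b Φ u 0) :
    ∀ S : Set (Fin n → ℝ), memSigma a b S → Φ S = 0 := by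
  classical
  -- degenerate bricks
  have hdeg : ∀ S, memSigma a b S → brickVol S ≤ 0 → Φ S = 0 := by
    intro S hS hv0
    obtain ⟨c, d, hac, hcd, hdb, rfl⟩ := hS
    have hv00 : brickVol (Icc c d) = 0 := le_antisymm hv0 (by
      rw [brickVol_Icc hcd]; exact Finset.prod_nonneg fun k _ => sub_nonneg.2 (hcd k))
    have hint : interior (Icc c d) = ∅ := by
      rw [brickVol_Icc hcd] at hv00
      obtain ⟨k, _, hk⟩ := Finset.prod_eq_zero_iff.mp hv00
      rw [interior_Icc_pi, univ_pi_eq_empty_iff]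
      exact ⟨k, by rw [Ioo_eq_empty_iff]; intro h; linarith [sub_eq_zero.mp hk ▸ h]⟩
    have h2 := hadd 2 (Icc c d) (fun _ => Icc c d) ⟨c, d, hac, hcd, hdb, rfl⟩
      (fun _ => ⟨c, d, hac, hcd, hdb, rfl⟩) (iUnion_const _).symm (fun i j hij => by simp [hint])
    simp [Fin.sum_univ_two] at h2
    linarith
  intro S hS
  obtain ⟨c, d, hac, hcd, hdb, rfl⟩ := hS
  rcases le_or_gt (brickVol (Icc c d)) 0 with hv | hv
  · exact hdeg _ ⟨c, d, hac, hcd, hdb, rfl⟩ hv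
  -- main estimate
  suffices habs : ∀ ε > (0:ℝ), |Φ (Icc c d)| ≤ ε * (brickVol (Icc c d) + L) by
    have hC : 0 < brickVol (Icc c d) + L := by linarith
    have h0 : |Φ (Icc c d)| ≤ 0 := by
      by_contra h
      push_neg at h
      have := habs (|Φ (Icc c d)| / (2 * (brickVol (Icc c d) + L))) (by positivity)
      rw [div_mul_eq_mul_div, mul_comm (2:ℝ) _, ← div_div, mul_div_assoc,
        div_self hC.ne'] at this
      linarith
    exact abs_nonpos_iff.mp h0
  intro ε hε
  -- the good sets
  set A : ℕ → Set (Fin n → ℝ) := fun m => {u | ∀ Q, memSigma a b Q → 0 < brickVol Q →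
    Q ⊆ EBall u (1/((m:ℝ)+1)) → |Φ Q| ≤ ε * brickVol Q} with hAdef
  have hδm : ∀ m : ℕ, (0:ℝ) < 1/((m:ℝ)+1) := fun m => by positivity
  have hAclosed : ∀ m, IsClosed (A m) := fun m => isClosed_goodSet a b Φ ε _ (hδm m)
  have hAmono : Monotone A := by
    intro m m' hmm u hu Q hQ hv' hsub
    refine hu Q hQ hv' (hsub.trans fun x hx => ?_)
    refine lt_of_lt_of_le hx (pow_le_pow_left₀ (hδm m').le ?_ 2)
    apply one_div_le_one_div_of_le (by positivity)
    have : (m:ℝ) ≤ m' := Nat.cast_le.2 hmm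
    linarith
  -- the exceptional set is null
  have hbad : volume (Icc c d \ ⋃ m, A m) = 0 := by
    have hE : volume {u : Fin n → ℝ |
        ¬(u ∈ interior (Icc a b) → StronglyDiffAt a b Φ u 0)} = 0 := hdiff
    have hfr : volume (Icc a b \ interior (Icc a b)) = 0 := by
      have h1 : volume (interior (Icc a b)) = ∏ k, ENNReal.ofReal (b k - a k) := by
        rw [interior_Icc_pi, volume_pi_pi]
        exact Finset.prod_congr rfl fun k _ => Real.volume_Ioo
      have hfin : volume (interior (Icc a b)) ≠ ⊤ := by
        rw [h1]
        exact (ENNReal.prod_lt_top fun k _ => ENNReal.ofReal_lt_top).ne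
      rw [measure_diff interior_subset measurableSet_interior.nullMeasurableSet hfin,
        Real.volume_Icc_pi, h1, tsub_self]
    refine measure_mono_null ?_ (measure_union_null hE hfr)
    rintro u ⟨huS, huA⟩
    by_cases hint : u ∈ interior (Icc a b)
    · by_cases hdif : StronglyDiffAt a b Φ u 0
      · exfalso
        apply huA
        obtain ⟨δ, hδ0, hδ⟩ := hdif ε hε
        obtain ⟨m, hm⟩ := exists_nat_one_div_lt hδ0
        refine mem_iUnion.2 ⟨m, fun Q hQ hv' hsub => ?_⟩
        have hEsub : EBall u (1/((m:ℝ)+1)) ⊆ EBall u δ := fun x hx =>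
          lt_of_lt_of_le hx (pow_le_pow_left₀ (hδm m).le hm.le 2)
        have h1 := hδ Q hQ hv' (hsub.trans hEsub)
        rw [sub_zero, abs_div, abs_of_pos hv'] at h1
        exact ((div_lt_iff₀ hv').mp h1).le
      · exact Or.inl fun h => hdif (h hint)
    · exact Or.inr ⟨⟨le_trans hac (huS.1), le_trans (huS.2) hdb⟩, hint⟩
  -- choose m with small bad measure
  have hIccfin : volume (Icc c d) ≠ ⊤ := by
    rw [Real.volume_Icc_pi]
    exact (ENNReal.prod_lt_top fun k _ => ENNReal.ofReal_lt_top).ne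
  have htend : Tendsto (fun m => volume (Icc c d \ A m)) atTop (𝓝 0) := by
    have h1 : (⋂ m, Icc c d \ A m) = Icc c d \ ⋃ m, A m := (diff_iUnion _ _).symm
    have h2 := tendsto_measure_iInter_atTop (μ := volume)
      (fun m => (measurableSet_Icc.diff (hAclosed m).measurableSet).nullMeasurableSet)
      (fun m m' hmm => diff_subset_diff_right (hAmono hmm))
      ⟨0, ne_top_of_le_ne_top hIccfin (measure_mono diff_subset)⟩
    rwa [h1, hbad] at h2
  obtain ⟨m, hm⟩ := (htend.eventually_lt_const (ENNReal.ofReal_pos.mpr hε)).exists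
  -- grid setup
  have hside : ∀ k, c k < d k := by
    intro k
    rcases eq_or_lt_of_le (hcd k) with heq | h
    · exfalso
      rw [brickVol_Icc hcd] at hv
      have h0 : (∏ k, (d k - c k)) = 0 :=
        Finset.prod_eq_zero (Finset.mem_univ k) (by rw [← heq]; ring)
      linarith
    · exact h
  set D : ℝ := (∑ k, (d k - c k)) + 1 with hDdef
  have hD0 : 0 < D := by
    have : 0 ≤ ∑ k, (d k - c k) := Finset.sum_nonneg fun k _ => sub_nonneg.2 (hcd k)
    simp only [hDdef]; linarith
  have hDside : ∀ k, d k - c k ≤ D := by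
    intro k
    have h1 : d k - c k ≤ ∑ k, (d k - c k) :=
      Finset.single_le_sum (fun k _ => sub_nonneg.2 (hcd k)) (Finset.mem_univ k)
    simp only [hDdef]; linarith
  have hsqn : (1:ℝ) ≤ √n := by
    rw [show (1:ℝ) = √1 by simp]
    exact Real.sqrt_le_sqrt (by exact_mod_cast hn)
  obtain ⟨N, hNgt⟩ := exists_nat_gt (√n * D * ((m:ℝ)+1))
  have hNpos : 0 < N := by
    have h1 : (0:ℝ) < √n * D * ((m:ℝ)+1) := by positivity
    exact_mod_cast Nat.cast_pos.mp (lt_trans h1 hNgt)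
  have hNR : (0:ℝ) < N := Nat.cast_pos.2 hNpos
  have hNkey : (n:ℝ) * (D/N)^2 < (1/((m:ℝ)+1))^2 := by
    have hbase : 0 ≤ √n * D * ((m:ℝ)+1) := by positivity
    have h2 : (√n * D * ((m:ℝ)+1))^2 < (N:ℝ)^2 := by nlinarith
    have hsq : (√n)^2 = n := Real.sq_sqrt (Nat.cast_nonneg n)
    have expand : (√n * D * ((m:ℝ)+1))^2 = n * D^2 * ((m:ℝ)+1)^2 := by
      rw [mul_pow, mul_pow, hsq]
    rw [expand] at h2
    rw [div_pow, div_pow, ← mul_div_assoc, div_lt_div_iff₀ (by positivity) (by positivity)]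
    nlinarith
  set lo : (Fin n → Fin N) → (Fin n → ℝ) := fun i k => c k + ((i k : ℕ):ℝ)/N * (d k - c k)
    with hlo
  set hi : (Fin n → Fin N) → (Fin n → ℝ) := fun i k => c k + (((i k : ℕ):ℝ)+1)/N * (d k - c k)
    with hhi
  have hmono : ∀ (k : Fin n) (p q : ℝ), p ≤ q →
      c k + p/N * (d k - c k) ≤ c k + q/N * (d k - c k) := by
    intro k p q h
    have e0 := sub_nonneg.2 (hcd k)
    exact add_le_add_right (mul_le_mul_of_nonneg_right
      ((div_le_div_iff_of_pos_right hNR).2 h) e0) _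
  have hlohi : ∀ i, lo i ≤ hi i := by
    intro i k
    exact hmono k _ _ (by linarith)
  have hclo : ∀ i, c ≤ lo i := by
    intro i k
    have h1 : c k + 0/N * (d k - c k) ≤ lo i k := hmono k 0 _ (Nat.cast_nonneg _)
    simpa using h1
  have hhid : ∀ i, hi i ≤ d := by
    intro i k
    have hik : ((i k : ℕ):ℝ) + 1 ≤ N := by exact_mod_cast (i k).2
    have h1 : hi i k ≤ c k + (N:ℝ)/N * (d k - c k) := hmono k _ _ hik
    rw [div_self hNR.ne'] at h1
    simpa using h1
  have hmemSig : ∀ i, memSigma a b (Icc (lo i) (hi i)) := fun i =>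
    ⟨lo i, hi i, le_trans hac (hclo i), hlohi i, le_trans (hhid i) hdb, rfl⟩
  have hsubS : ∀ i, Icc (lo i) (hi i) ⊆ Icc c d := fun i => Icc_subset_Icc (hclo i) (hhid i)
  have hgap : ∀ i k, hi i k - lo i k = (d k - c k)/N := by
    intro i k; simp only [hlo, hhi]; ring
  have hvolQ : ∀ i, brickVol (Icc (lo i) (hi i)) = ∏ k, (d k - c k)/N := by
    intro i; rw [brickVol_Icc (hlohi i)]; exact Finset.prod_congr rfl fun k _ => hgap i k
  have hvolQpos : ∀ i, 0 < brickVol (Icc (lo i) (hi i)) := by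
    intro i
    rw [hvolQ]
    refine Finset.prod_pos fun k _ => ?_
    exact div_pos (sub_pos.2 (hside k)) hNR
  have hcover : Icc c d = ⋃ i : Fin n → Fin N, Icc (lo i) (hi i) := by
    apply Subset.antisymm
    · intro x hx
      obtain ⟨i, hi'⟩ := grid_cover hNpos hx
      exact mem_iUnion.2 ⟨i, fun k => (hi' k).1, fun k => (hi' k).2⟩
    · exact iUnion_subset hsubS
  have hdisj : ∀ i j : (Fin n → Fin N), i ≠ j →
      interior (Icc (lo i) (hi i)) ∩ interior (Icc (lo j) (hi j)) = ∅ := by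
    intro i j hij
    rw [interior_Icc_pi, interior_Icc_pi, eq_empty_iff_forall_notMem]
    rintro x ⟨hxi, hxj⟩
    have hk : ∃ k, i k ≠ j k := by
      by_contra h; push_neg at h; exact hij (funext h)
    obtain ⟨k, hk⟩ := hk
    have h1 := hxi k (mem_univ k)
    have h2 := hxj k (mem_univ k)
    rcases Nat.lt_or_ge (i k : ℕ) (j k : ℕ) with hlt | hge
    · have hcast : ((i k : ℕ):ℝ) + 1 ≤ ((j k : ℕ):ℝ) := by exact_mod_cast hlt
      have hle : hi i k ≤ lo j k := hmono k _ _ hcast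
      have := h1.2; have := h2.1
      simp only [hlo, hhi] at *
      linarith
    · have hlt' : (j k : ℕ) < (i k : ℕ) := by
        rcases Nat.lt_or_ge (j k : ℕ) (i k : ℕ) with h | h
        · exact h
        · exact absurd (Fin.val_injective (le_antisymm h hge)) hk
      have hcast : ((j k : ℕ):ℝ) + 1 ≤ ((i k : ℕ):ℝ) := by exact_mod_cast hlt'
      have hle : hi j k ≤ lo i k := hmono k _ _ hcast
      have := h1.1; have := h2.2
      simp only [hlo, hhi] at *
      linarith
  set Q : (Fin n → Fin N) → Set (Fin n → ℝ) := fun i => Icc (lo i) (hi i) with hQ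
  set e := (Fintype.equivFin (Fin n → Fin N)) with he
  have hΦsum : Φ (Icc c d) = ∑ i : Fin n → Fin N, Φ (Q i) := by
    rw [hadd (Fintype.card (Fin n → Fin N)) (Icc c d) (fun p => Q (e.symm p))
      ⟨c, d, hac, hcd, hdb, rfl⟩ (fun p => hmemSig _)
      (by rw [hcover]; exact (e.symm.surjective.iUnion_comp Q).symm)
      (fun p q hpq => hdisj _ _ (fun h => hpq (e.symm.injective h)))]
    exact Equiv.sum_comp e.symm (fun i => Φ (Q i))
  have hμint : ∀ i, volume (interior (Q i)) = ENNReal.ofReal (brickVol (Q i)) :=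
    fun i => volume_interior_Icc (hlohi i)
  have hsum_le : ∀ (t : Finset (Fin n → Fin N)) (W : Set (Fin n → ℝ)),
      (∀ i ∈ t, Q i ⊆ W) → volume W ≠ ⊤ →
      ∑ i ∈ t, brickVol (Q i) ≤ (volume W).toReal := by
    intro t W hW hWfin
    have hdisj' : (t : Set (Fin n → Fin N)).PairwiseDisjoint (fun i => interior (Q i)) := by
      intro i _ j _ hij
      rw [Function.onFun, Set.disjoint_iff_inter_eq_empty]
      exact hdisj i j hij
    have hmeas := measure_biUnion_finset (μ := volume) hdisj' (fun i _ => isOpen_interior.measurableSet)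
    have hle : ∑ i ∈ t, ENNReal.ofReal (brickVol (Q i)) ≤ volume W := by
      calc ∑ i ∈ t, ENNReal.ofReal (brickVol (Q i))
          = ∑ i ∈ t, volume (interior (Q i)) :=
            Finset.sum_congr rfl fun i _ => (hμint i).symm
        _ = volume (⋃ i ∈ t, interior (Q i)) := hmeas.symm
        _ ≤ volume W := measure_mono
            (iUnion₂_subset fun i hi' => interior_subset.trans (hW i hi'))
    calc ∑ i ∈ t, brickVol (Q i)
        = (∑ i ∈ t, ENNReal.ofReal (brickVol (Q i))).toReal := by
          rw [ENNReal.toReal_sum (fun i _ => ENNReal.ofReal_ne_top)]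
          exact (Finset.sum_congr rfl fun i _ =>
            (ENNReal.toReal_ofReal (hvolQpos i).le).symm)
      _ ≤ (volume W).toReal := ENNReal.toReal_mono hWfin hle
  set good : Finset (Fin n → Fin N) :=
    Finset.univ.filter (fun i => (Q i ∩ A m).Nonempty) with hgood
  have hgoodbound : ∀ i ∈ good, |Φ (Q i)| ≤ ε * brickVol (Q i) := by
    intro i hig
    obtain ⟨u, huQ, huA⟩ := (Finset.mem_filter.mp hig).2
    refine huA (Q i) (hmemSig i) (hvolQpos i) ?_
    intro x hx
    have hbd : ∀ k, (x k - u k)^2 ≤ (D/N)^2 := by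
      intro k
      have hg := hgap i k
      have h1 : x k - u k ≤ (d k - c k)/N := by
        have a1 : x k ≤ hi i k := hx.2 k
        have a2 : lo i k ≤ u k := huQ.1 k
        calc x k - u k ≤ hi i k - lo i k := by linarith
          _ = (d k - c k)/N := hg
      have h2 : -((d k - c k)/N) ≤ x k - u k := by
        have a1 : lo i k ≤ x k := hx.1 k
        have a2 : u k ≤ hi i k := huQ.2 k
        calc -((d k - c k)/N) = -(hi i k - lo i k) := by rw [hg]
          _ ≤ x k - u k := by linarith
      have h3 : (d k - c k)/N ≤ D/N := by gcongr; exact hDside k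
      have h4 : (0:ℝ) ≤ (d k - c k)/N := div_nonneg (sub_nonneg.2 (hcd k)) hNR.le
      exact sq_le_sq' (by linarith) (by linarith)
    calc ∑ k, (x k - u k)^2 ≤ ∑ _k : Fin n, (D/N)^2 := Finset.sum_le_sum fun k _ => hbd k
      _ = n * (D/N)^2 := by simp [mul_comm]
      _ < (1/((m:ℝ)+1))^2 := hNkey
  have hbadbound : ∑ i ∈ goodᶜ, brickVol (Q i) < ε := by
    have hsub2 : ∀ i ∈ goodᶜ, Q i ⊆ Icc c d \ A m := by
      intro i hig x hx
      refine ⟨hsubS i hx, fun hxA => ?_⟩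
      have hne : ¬ (Q i ∩ A m).Nonempty := by
        simpa [hgood, Finset.mem_compl, Finset.mem_filter] using hig
      exact hne ⟨x, hx, hxA⟩
    have hfin : volume (Icc c d \ A m) ≠ ⊤ :=
      ne_top_of_le_ne_top hIccfin (measure_mono diff_subset)
    calc ∑ i ∈ goodᶜ, brickVol (Q i) ≤ (volume (Icc c d \ A m)).toReal :=
          hsum_le goodᶜ _ hsub2 hfin
      _ < ε := ENNReal.toReal_lt_of_lt_ofReal hm
  have hgoodvol : ∑ i ∈ good, brickVol (Q i) ≤ brickVol (Icc c d) := by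
    have h1 := hsum_le good (Icc c d) (fun i _ => hsubS i) hIccfin
    rwa [volume_Icc_toReal hcd] at h1
  rw [hΦsum]
  calc |∑ i, Φ (Q i)| ≤ ∑ i, |Φ (Q i)| := Finset.abs_sum_le_sum_abs _ _
    _ = ∑ i ∈ good, |Φ (Q i)| + ∑ i ∈ goodᶜ, |Φ (Q i)| :=
        (Finset.sum_add_sum_compl good _).symm
    _ ≤ ε * (∑ i ∈ good, brickVol (Q i)) + L * (∑ i ∈ goodᶜ, brickVol (Q i)) := by
        refine add_le_add ?_ ?_
        · rw [Finset.mul_sum]; exact Finset.sum_le_sum hgoodbound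
        · rw [Finset.mul_sum]; exact Finset.sum_le_sum (fun i _ => hLip (Q i) (hmemSig i))
    _ ≤ ε * brickVol (Icc c d) + L * ε :=
        add_le_add (mul_le_mul_of_nonneg_left hgoodvol hε.le)
          (mul_le_mul_of_nonneg_left hbadbound.le hL.le)
    _ = ε * (brickVol (Icc c d) + L) := by ring
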